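/- arXiv:2406.16946 — 5 statements merged into one kernel-verified Lean document; each statement's English description precedes it below -/
import Mathlib

section
/- Let n be a positive integer, let h ∈ ℂⁿ, and let W be an n×n complex positive-semidefinite Hermitian matrix with hᴴ W h ≠ 0 (so that hᴴ W h is a strictly positive real number). Define w̄ := (hᴴ W h)^(−1/2) · (W h) and W̄ := w̄ w̄ᴴ. Then W̄ is positive semidefinite, has rank at most 1, and satisfies hᴴ W̄ h = hᴴ W h. -/
/-!
Since `W` is positive semidefinite, `c = hᴴ W h` is a nonnegative real, so `hᴴ w̄ = c^(-1/2) c = √c`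
is real and `hᴴ (w̄ w̄ᴴ) h = |hᴴ w̄|² = c`. Positivity and rank at most one hold for every outer
product `w wᴴ`.
-/

open Matrix
open scoped ComplexOrder

theorem Matrix.star_dotProduct_vecMulVec_mulVec {ι R : Type*} [Fintype ι] [CommSemiring R]
    [StarRing R] (x w : ι → R) :
    star x ⬝ᵥ (vecMulVec w (star w) *ᵥ x) = (star x ⬝ᵥ w) * star (star x ⬝ᵥ w) := by
  rw [vecMulVec_mulVec, op_smul_eq_smul, dotProduct_smul, smul_eq_mul, mul_comm,
    star_dotProduct, star_star, dotProduct_comm]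

/-- At `r = 0` both sides vanish, whatever the junk value of `0 ^ (-1/2)`. -/
theorem Complex.ofReal_cpow_neg_half_mul_self {r : ℝ} (hr : 0 ≤ r) :
    (r : ℂ) ^ (-(1 / 2) : ℂ) * r = (√r : ℂ) := by
  have hpow : (r : ℂ) ^ (-(1 / 2) : ℂ) = ((r ^ (-(1 / 2) : ℝ) : ℝ) : ℂ) := by
    rw [Complex.ofReal_cpow hr]; push_cast; rfl
  rw [hpow, Real.rpow_neg hr, ← Real.sqrt_eq_rpow, ← Complex.ofReal_mul, ← div_eq_inv_mul,
    Real.div_sqrt]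

theorem Complex.cpow_neg_half_mul_self_mul_star {c : ℂ} (hc : 0 ≤ c) :
    c ^ (-(1 / 2) : ℂ) * c * star (c ^ (-(1 / 2) : ℂ) * c) = c := by
  obtain ⟨r, hr, rfl⟩ : ∃ r : ℝ, 0 ≤ r ∧ (r : ℂ) = c :=
    ⟨c.re, (Complex.nonneg_iff.1 hc).1, (Complex.eq_re_of_ofReal_le (by exact_mod_cast hc)).symm⟩
  rw [Complex.ofReal_cpow_neg_half_mul_self hr, Complex.star_def, Complex.conj_ofReal,
    ← Complex.ofReal_mul, Real.mul_self_sqrt hr]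

theorem stmt0_general (n : ℕ) (h : Fin n → ℂ) (W : Matrix (Fin n) (Fin n) ℂ)
    (hW : W.PosSemidef) :
    let wbar : Fin n → ℂ := ((star h ⬝ᵥ (W *ᵥ h)) ^ (-(1/2) : ℂ)) • (W *ᵥ h)
    let Wbar : Matrix (Fin n) (Fin n) ℂ := vecMulVec wbar (star wbar)
    Wbar.PosSemidef ∧ Wbar.rank ≤ 1 ∧ star h ⬝ᵥ (Wbar *ᵥ h) = star h ⬝ᵥ (W *ᵥ h) := by
  intro wbar Wbar
  refine ⟨posSemidef_vecMulVec_self_star wbar, rank_vecMulVec_le wbar (star wbar), ?_⟩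
  rw [star_dotProduct_vecMulVec_mulVec, dotProduct_smul, smul_eq_mul]
  exact Complex.cpow_neg_half_mul_self_mul_star (hW.dotProduct_mulVec_nonneg h)

theorem stmt0 (n : ℕ) (hn : 0 < n) (h : Fin n → ℂ) (W : Matrix (Fin n) (Fin n) ℂ)
    (hW : W.PosSemidef) (hne : star h ⬝ᵥ (W *ᵥ h) ≠ 0) :
    let wbar : Fin n → ℂ := ((star h ⬝ᵥ (W *ᵥ h)) ^ (-(1/2) : ℂ)) • (W *ᵥ h)
    let Wbar : Matrix (Fin n) (Fin n) ℂ := vecMulVec wbar (star wbar)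
    Wbar.PosSemidef ∧ Wbar.rank ≤ 1 ∧ star h ⬝ᵥ (Wbar *ᵥ h) = star h ⬝ᵥ (W *ᵥ h) :=
  stmt0_general n h W hW
end

section
/- Let n, K be positive integers. For each i ∈ {1,…,K}, let Wᵢ be an n×n complex positive-semidefinite Hermitian matrix and hᵢ ∈ ℂⁿ a vector with hᵢᴴ Wᵢ hᵢ ≠ 0, and let R be an n×n positive-semidefinite Hermitian matrix. Define w̄ᵢ := (hᵢᴴ Wᵢ hᵢ)^(−1/2) · (Wᵢ hᵢ), W̄ᵢ := w̄ᵢ w̄ᵢᴴ, and R̄ := Σᵢ Wᵢ + R − Σᵢ W̄ᵢ. Then R̄ is positive semidefinite, and Σᵢ W̄ᵢ + R̄ = Σᵢ Wᵢ + R. -/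
open Matrix
open scoped ComplexOrder

/-!
With `v = W h` and `c = hᴴ W h ≥ 0`, the rank-one matrix `W̄ = c^(-1/2) v (c^(-1/2) v)ᴴ` equals
`c⁻¹ v vᴴ`, and `W - c⁻¹ v vᴴ` is the congruence `Pᴴ W P` with `P = 1 - c⁻¹ h vᴴ`, hence positive
semidefinite. Summing over the users and adding `R` shows that `R̄` is positive semidefinite; the
covariance identity is immediate.
-/

namespace Matrix

variable {n 𝕜 : Type*} [Fintype n] [DecidableEq n] [RCLike 𝕜]

theorem PosSemidef.sub_inv_smul_vecMulVec_mulVec {W : Matrix n n 𝕜} (hW : W.PosSemidef)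
    (h : n → 𝕜) :
    (W - (star h ⬝ᵥ (W *ᵥ h))⁻¹ • vecMulVec (W *ᵥ h) (star (W *ᵥ h))).PosSemidef := by
  set c := star h ⬝ᵥ (W *ᵥ h)
  set v := W *ᵥ h
  have hc : star c = c := IsSelfAdjoint.of_nonneg (hW.dotProduct_mulVec_nonneg h)
  have hv : star h ᵥ* W = star v := by rw [star_mulVec, hW.1.eq]
  have hvh : star v ⬝ᵥ h = c := by rw [← hv, ← dotProduct_mulVec]
  have hleft : vecMulVec v (star h) * W = vecMulVec v (star v) := by rw [vecMulVec_mul, hv]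
  have hright : W * vecMulVec h (star v) = vecMulVec v (star v) := mul_vecMulVec ..
  have hsq : vecMulVec v (star v) * vecMulVec h (star v) = c • vecMulVec v (star v) := by
    rw [vecMulVec_mul_vecMulVec, hvh, vecMulVec_smul]
  have hinv : c⁻¹ * (c⁻¹ * c) = c⁻¹ := by rcases eq_or_ne c 0 with h0 | h0 <;> simp [h0]
  -- For `c = 0` the junk value `c⁻¹ = 0` makes `P = 1`, so no case split is needed.
  set P : Matrix n n 𝕜 := 1 - c⁻¹ • vecMulVec h (star v)
  have hP : Pᴴ * W * P = W - c⁻¹ • vecMulVec v (star v) := by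
    simp only [P, conjTranspose_sub, conjTranspose_one, conjTranspose_smul, star_inv₀, hc,
      conjTranspose_vecMulVec, star_star, sub_mul, mul_sub, one_mul, mul_one, smul_mul,
      Matrix.mul_smul, hleft, hright, hsq, smul_smul, hinv]
    abel
  rw [← hP]
  exact hW.conjTranspose_mul_mul_same P

end Matrix

theorem Complex.star_cpow_neg_half_mul_self {c : ℂ} (hc : 0 ≤ c) :
    star (c ^ (-(1/2) : ℂ)) * c ^ (-(1/2) : ℂ) = c⁻¹ := by
  obtain ⟨r, hr, rfl⟩ : ∃ r : ℝ, 0 ≤ r ∧ (r : ℂ) = c :=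
    ⟨c.re, (Complex.nonneg_iff.mp hc).1,
      (Complex.eq_re_of_ofReal_le (r := 0) (by simpa using hc)).symm⟩
  have hpow : (r : ℂ) ^ (-(1/2) : ℂ) = ((r ^ (-(1/2) : ℝ) : ℝ) : ℂ) := by
    rw [Complex.ofReal_cpow hr]; push_cast; rfl
  rw [hpow, Complex.star_def, Complex.conj_ofReal, ← Complex.ofReal_mul,
    ← Real.rpow_add' hr (by norm_num), show (-(1/2) : ℝ) + -(1/2) = -1 by norm_num,
    Real.rpow_neg_one, Complex.ofReal_inv]

theorem stmt2_general (n K : ℕ)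
    (W : Fin K → Matrix (Fin n) (Fin n) ℂ) (h : Fin K → Fin n → ℂ)
    (R : Matrix (Fin n) (Fin n) ℂ)
    (hW : ∀ i, (W i).PosSemidef) (hR : R.PosSemidef) :
    let wbar : Fin K → Fin n → ℂ :=
      fun i => ((star (h i) ⬝ᵥ (W i *ᵥ h i)) ^ (-(1/2) : ℂ)) • (W i *ᵥ h i)
    let Wbar : Fin K → Matrix (Fin n) (Fin n) ℂ :=
      fun i => vecMulVec (wbar i) (star (wbar i))
    let Rbar : Matrix (Fin n) (Fin n) ℂ := (∑ i, W i) + R - ∑ i, Wbar i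
    Rbar.PosSemidef ∧ (∑ i, Wbar i) + Rbar = (∑ i, W i) + R := by
  intro wbar Wbar Rbar
  have hWbar (i : Fin K) : Wbar i
      = (star (h i) ⬝ᵥ (W i *ᵥ h i))⁻¹ • vecMulVec (W i *ᵥ h i) (star (W i *ᵥ h i)) := by
    simp only [Wbar, wbar, star_smul, smul_vecMulVec, vecMulVec_smul, smul_smul,
      Complex.star_cpow_neg_half_mul_self ((hW i).dotProduct_mulVec_nonneg (h i))]
  have hRbar : Rbar = ∑ i, (W i - Wbar i) + R := by
    simp only [Rbar, Finset.sum_sub_distrib]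
    abel
  refine ⟨?_, add_sub_cancel _ _⟩
  rw [hRbar]
  refine (posSemidef_sum _ fun i _ => ?_).add hR
  rw [hWbar i]
  exact (hW i).sub_inv_smul_vecMulVec_mulVec (h i)

theorem stmt2 (n K : ℕ) (hn : 0 < n) (hK : 0 < K)
    (W : Fin K → Matrix (Fin n) (Fin n) ℂ) (h : Fin K → Fin n → ℂ)
    (R : Matrix (Fin n) (Fin n) ℂ)
    (hW : ∀ i, (W i).PosSemidef) (hR : R.PosSemidef)
    (hne : ∀ i, star (h i) ⬝ᵥ (W i *ᵥ h i) ≠ 0) :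
    let wbar : Fin K → Fin n → ℂ :=
      fun i => ((star (h i) ⬝ᵥ (W i *ᵥ h i)) ^ (-(1/2) : ℂ)) • (W i *ᵥ h i)
    let Wbar : Fin K → Matrix (Fin n) (Fin n) ℂ :=
      fun i => vecMulVec (wbar i) (star (wbar i))
    let Rbar : Matrix (Fin n) (Fin n) ℂ := (∑ i, W i) + R - ∑ i, Wbar i
    Rbar.PosSemidef ∧ (∑ i, Wbar i) + Rbar = (∑ i, W i) + R :=
  stmt2_general n K W h R hW hR
end

section
/- Let n be a positive integer, let M and K be nonempty finite index sets, and fix a pair (m₀,k₀) ∈ M × K. Let h ∈ ℂⁿ and set H := h hᴴ. For each (l,i) ∈ M × K, let W_{l,i} be an n×n complex positive-semidefinite Hermitian matrix and h_{l,i} ∈ ℂⁿ a vector with h_{l,i}ᴴ W_{l,i} h_{l,i} ≠ 0 and with h_{m₀,k₀} = h; for each l ∈ M let R_l be an n×n positive-semidefinite Hermitian matrix. Define w̄_{l,i} := (h_{l,i}ᴴ W_{l,i} h_{l,i})^(−1/2) · (W_{l,i} h_{l,i}), W̄_{l,i} := w̄_{l,i} w̄_{l,i}ᴴ, and R̄_l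 := Σ_{i∈K} W_{l,i} + R_l − Σ_{i∈K} W̄_{l,i}. Then for every σ² > 0, tr(H W̄_{m₀,k₀}) / ( Σ_{(l,i)≠(m₀,k₀)} tr(H W̄_{l,i}) + Σ_{l∈M} tr(H R̄_l) + σ² ) = tr(H W_{m₀,k₀}) / ( Σ_{(l,i)≠(m₀,k₀)} tr(H W_{l,i}) + Σ_{l∈M} tr(H R_l) + σ² ), where all traces are the (real) values of the corresponding quadratic forms. -/
open Matrix
open scoped ComplexOrder

/-!
Write `a = h_{m₀,k₀}ᴴ W_{m₀,k₀} h_{m₀,k₀}`, a positive real. The reconstructed beam is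
`w̄ = a^(-1/2) W h`, so `hᴴ w̄ w̄ᴴ h = |a^(-1/2) a|² = a`: the useful-signal term is unchanged.
Since `X ↦ hᴴ X h` is additive, `R̄_l` absorbs exactly the difference `Σᵢ (W_{l,i} - W̄_{l,i})`,
and summing over `l` cancels it against the interference terms of the other users; what is
left over is the difference at `(m₀,k₀)` itself, which vanishes by the first step.
-/

theorem Complex.star_mul_self_cpow_neg_half_mul {a : ℂ} (ha : 0 < a) :
    star (a ^ (-(1/2) : ℂ) * a) * (a ^ (-(1/2) : ℂ) * a) = a := by
  obtain ⟨r, hr, rfl⟩ : ∃ r : ℝ, 0 < r ∧ (r : ℂ) = a :=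
    ⟨a.re, (pos_iff.1 ha).1, ext rfl (pos_iff.1 ha).2⟩
  have hroot : (r : ℂ) ^ (-(1/2) : ℂ) = ((r ^ (-(1/2) : ℝ) : ℝ) : ℂ) := by
    rw [ofReal_cpow hr.le]; push_cast; rfl
  have hsq : r ^ (-(1/2) : ℝ) * r ^ (-(1/2) : ℝ) * r = 1 := by
    rw [← Real.rpow_add hr]; norm_num [Real.rpow_neg_one, hr.ne']
  rw [hroot, star_def, map_mul, conj_ofReal, conj_ofReal]
  calc _ = ((r ^ (-(1/2) : ℝ) * r ^ (-(1/2) : ℝ) * r : ℝ) : ℂ) * r := by push_cast; ring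
    _ = r := by rw [hsq]; simp

theorem Matrix.star_dotProduct_vecMulVec_star_mulVec {n R : Type*} [Fintype n] [CommSemiring R]
    [StarRing R] (u x : n → R) :
    star x ⬝ᵥ (vecMulVec u (star u) *ᵥ x) = star (star x ⬝ᵥ u) * (star x ⬝ᵥ u) := by
  rw [vecMulVec_mulVec, dotProduct_smul, ← star_dotProduct]
  simp [mul_comm]

theorem Matrix.star_dotProduct_vecMulVec_cpow_neg_half_smul {n : Type*} [Fintype n]
    (v x : n → ℂ) (hpos : 0 < star x ⬝ᵥ v) :
    star x ⬝ᵥ (vecMulVec ((star x ⬝ᵥ v) ^ (-(1/2) : ℂ) • v)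
      (star ((star x ⬝ᵥ v) ^ (-(1/2) : ℂ) • v)) *ᵥ x) = star x ⬝ᵥ v := by
  rw [star_dotProduct_vecMulVec_star_mulVec, dotProduct_smul, smul_eq_mul,
    Complex.star_mul_self_cpow_neg_half_mul hpos]

theorem Finset.sum_erase_add_sum_add_sub_eq {ι κ A : Type*} [Fintype ι] [Fintype κ]
    [DecidableEq ι] [DecidableEq κ] [AddCommGroup A] (f g : ι × κ → A) (r : ι → A)
    (p : ι × κ) (hp : f p = g p) :
    ∑ q ∈ univ.erase p, f q + ∑ l, (∑ i, g (l, i) + r l - ∑ i, f (l, i))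
      = ∑ q ∈ univ.erase p, g q + ∑ l, r l := by
  simp only [sum_sub_distrib, sum_add_distrib, ← Fintype.sum_prod_type',
    sum_erase_eq_sub (mem_univ p), hp]
  abel

theorem stmt4_general (n : ℕ) (M K : Type*) [Fintype M] [Fintype K]
    [DecidableEq M] [DecidableEq K]
    (m₀ : M) (k₀ : K) (h : Fin n → ℂ)
    (W : M × K → Matrix (Fin n) (Fin n) ℂ) (hch : M × K → Fin n → ℂ)
    (R : M → Matrix (Fin n) (Fin n) ℂ)
    (hW : ∀ p, (W p).PosSemidef)
    (hne : ∀ p, star (hch p) ⬝ᵥ (W p *ᵥ hch p) ≠ 0)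
    (hh : hch (m₀, k₀) = h) (σ2 : ℝ) :
    let H : Matrix (Fin n) (Fin n) ℂ := vecMulVec h (star h)
    let trH : Matrix (Fin n) (Fin n) ℂ → ℝ := fun X => (star h ⬝ᵥ (X *ᵥ h)).re
    let wbar : M × K → Fin n → ℂ :=
      fun p => ((star (hch p) ⬝ᵥ (W p *ᵥ hch p)) ^ (-(1/2) : ℂ)) • (W p *ᵥ hch p)
    let Wbar : M × K → Matrix (Fin n) (Fin n) ℂ :=
      fun p => vecMulVec (wbar p) (star (wbar p))
    let Rbar : M → Matrix (Fin n) (Fin n) ℂ :=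
      fun l => (∑ i : K, W (l, i)) + R l - ∑ i : K, Wbar (l, i)
    trH (Wbar (m₀, k₀)) /
        ((∑ p ∈ Finset.univ.erase (m₀, k₀), trH (Wbar p)) + (∑ l, trH (Rbar l)) + σ2)
      = trH (W (m₀, k₀)) /
        ((∑ p ∈ Finset.univ.erase (m₀, k₀), trH (W p)) + (∑ l, trH (R l)) + σ2) := by
  intro _ trH wbar Wbar Rbar
  have hdiag : trH (Wbar (m₀, k₀)) = trH (W (m₀, k₀)) := by
    subst hh
    have hpos := ((hW _).dotProduct_mulVec_nonneg (hch (m₀, k₀))).lt_of_ne' (hne _)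
    exact congrArg Complex.re (star_dotProduct_vecMulVec_cpow_neg_half_smul _ _ hpos)
  have hRbar : ∀ l, trH (Rbar l)
      = ∑ i, trH (W (l, i)) + trH (R l) - ∑ i, trH (Wbar (l, i)) := fun l => by
    simp only [trH, Rbar, add_mulVec, sub_mulVec, sum_mulVec, dotProduct_add, dotProduct_sub,
      dotProduct_sum, Complex.add_re, Complex.sub_re, Complex.re_sum]
  rw [Finset.sum_congr rfl fun l _ => hRbar l, Finset.sum_erase_add_sum_add_sub_eq
    (fun p => trH (Wbar p)) (fun p => trH (W p)) (fun l => trH (R l)) _ hdiag, hdiag]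

theorem stmt4 (n : ℕ) (hn : 0 < n) (M K : Type*) [Fintype M] [Fintype K]
    [Nonempty M] [Nonempty K] [DecidableEq M] [DecidableEq K]
    (m₀ : M) (k₀ : K) (h : Fin n → ℂ)
    (W : M × K → Matrix (Fin n) (Fin n) ℂ) (hch : M × K → Fin n → ℂ)
    (R : M → Matrix (Fin n) (Fin n) ℂ)
    (hW : ∀ p, (W p).PosSemidef) (hR : ∀ l, (R l).PosSemidef)
    (hne : ∀ p, star (hch p) ⬝ᵥ (W p *ᵥ hch p) ≠ 0)
    (hh : hch (m₀, k₀) = h) (σ2 : ℝ) (hσ : 0 < σ2) :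
    let H : Matrix (Fin n) (Fin n) ℂ := vecMulVec h (star h)
    let trH : Matrix (Fin n) (Fin n) ℂ → ℝ := fun X => (star h ⬝ᵥ (X *ᵥ h)).re
    let wbar : M × K → Fin n → ℂ :=
      fun p => ((star (hch p) ⬝ᵥ (W p *ᵥ hch p)) ^ (-(1/2) : ℂ)) • (W p *ᵥ hch p)
    let Wbar : M × K → Matrix (Fin n) (Fin n) ℂ :=
      fun p => vecMulVec (wbar p) (star (wbar p))
    let Rbar : M → Matrix (Fin n) (Fin n) ℂ :=
      fun l => (∑ i : K, W (l, i)) + R l - ∑ i : K, Wbar (l, i)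
    trH (Wbar (m₀, k₀)) /
        ((∑ p ∈ Finset.univ.erase (m₀, k₀), trH (Wbar p)) + (∑ l, trH (Rbar l)) + σ2)
      = trH (W (m₀, k₀)) /
        ((∑ p ∈ Finset.univ.erase (m₀, k₀), trH (W p)) + (∑ l, trH (R l)) + σ2) :=
  stmt4_general n M K m₀ k₀ h W hch R hW hne hh σ2
end

section
/- Let n be a positive integer, let M and K be nonempty finite index sets, and fix (m₀,k₀) ∈ M × K. Let h ∈ ℂⁿ, H := h hᴴ, and let c ∈ ℝ, a ∈ ℝ be arbitrary constants. For each (l,i) ∈ M × K, let W_{l,i} and W⁰_{l,i} be n×n complex positive-semidefinite Hermitian matrices with h_{l,i}ᴴ W_{l,i} h_{l,i} ≠ 0 for given vectors h_{l,i} ∈ ℂⁿ satisfying h_{m₀,k₀} = h; for each l ∈ M let R_l and R⁰_l be positive-semidefinite Hermitian matrices. Define the reconstruction w̄_{l,i} := (h_{l,i}ᴴ W_{l,i} h_{l,i})^(−1/2) · (W_{l,i} h_{l,i}), W̄_{l,i} := w̄_{l,i} w̄_{l,i}ᴴ, R̄_l := Σ_{i} W_{l,i} + R_l − Σ_{i}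 W̄_{l,i}, and the surrogate objective F(V,S) := log₂( Σ_{(l,i)} tr(H V_{l,i}) + Σ_l tr(H S_l) + σ² ) − a − c·( Σ_{(l,i)≠(m₀,k₀)} tr(H (V_{l,i} − W⁰_{l,i})) + Σ_l tr(H (S_l − R⁰_l)) ) for σ² > 0. Then F(W̄, R̄) = F(W, R). -/
/-!
The surrogate depends on `(V, S)` only through the total received power
`∑ tr(H V) + ∑ tr(H S)` and the desired-signal power `tr(H V_{m₀,k₀})`: the interference term
is the total minus the desired signal minus a constant. `R̄` is built so that the total power is
unchanged, and the rank-one reconstruction keeps `hᴴ W h`, since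
`|z ^ (-1/2) · z|² = |z| = z` for `z = hᴴ W h ≥ 0`.
-/

open Matrix
open scoped ComplexOrder

-- At `z = 0` both sides vanish, because `0 ^ w = 0` for `w ≠ 0`.
theorem Complex.normSq_cpow_neg_half_mul_self (z : ℂ) :
    Complex.normSq (z ^ (-(1 / 2) : ℂ) * z) = ‖z‖ := by
  have hexp : (-(1 / 2) : ℂ) = ((-(1 / 2) : ℝ) : ℂ) := by push_cast; ring
  rw [Complex.normSq_eq_norm_sq, norm_mul, hexp, Complex.norm_cpow_real]
  rcases (norm_nonneg z).eq_or_lt with hz | hz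
  · simp [← hz]
  · rw [mul_pow, ← Real.rpow_natCast, ← Real.rpow_mul hz.le]
    norm_num [Real.rpow_neg_one]
    field_simp

section QuadForm

variable {n : Type*} [Fintype n]

-- `quadFormRe h X` is the paper's `tr(H X)` with `H = h hᴴ`.
def quadFormRe (x : n → ℂ) : Matrix n n ℂ →+ ℝ :=
  AddMonoidHom.mk' (fun X => (star x ⬝ᵥ (X *ᵥ x)).re) fun X Y => by
    simp [add_mulVec, dotProduct_add]

theorem quadFormRe_apply (x : n → ℂ) (X : Matrix n n ℂ) :
    quadFormRe x X = (star x ⬝ᵥ (X *ᵥ x)).re := rfl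

theorem quadFormRe_vecMulVec_star (x v : n → ℂ) :
    quadFormRe x (vecMulVec v (star v)) = Complex.normSq (star x ⬝ᵥ v) := by
  rw [quadFormRe_apply, vecMulVec_mulVec, star_dotProduct (v := v)]
  simp only [dotProduct_smul, op_smul_eq_mul]
  rw [Complex.star_def, Complex.mul_conj, Complex.ofReal_re]

theorem Matrix.PosSemidef.quadFormRe_vecMulVec_rescale {A : Matrix n n ℂ} (hA : A.PosSemidef)
    (x : n → ℂ) :
    let w := (star x ⬝ᵥ (A *ᵥ x)) ^ (-(1 / 2) : ℂ) • (A *ᵥ x)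
    quadFormRe x (vecMulVec w (star w)) = quadFormRe x A := by
  intro w
  rw [quadFormRe_vecMulVec_star, dotProduct_smul, smul_eq_mul,
    Complex.normSq_cpow_neg_half_mul_self, quadFormRe_apply]
  simpa using congrArg Complex.re (Complex.norm_of_nonneg' (hA.dotProduct_mulVec_nonneg x))

end QuadForm

namespace AddMonoidHom

open Finset

variable {G A : Type*} [AddCommGroup G] [AddCommGroup A] (φ : G →+ A)

theorem sum_map_add_sum_map_transfer {M K : Type*} [Fintype M] [Fintype K]
    (W W' : M × K → G) (R : M → G) :
    ∑ p, φ (W' p) + ∑ l, φ ((∑ i, W (l, i)) + R l - ∑ i, W' (l, i)) =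
      ∑ p, φ (W p) + ∑ l, φ (R l) := by
  simp only [map_sub, map_add, map_sum, sum_sub_distrib, sum_add_distrib,
    ← Fintype.sum_prod_type']
  abel

theorem sum_erase_map_sub_add_sum_map_sub {ι κ : Type*} [Fintype ι] [DecidableEq ι] [Fintype κ]
    (p₀ : ι) (V W : ι → G) (S R : κ → G) :
    ∑ p ∈ univ.erase p₀, φ (V p - W p) + ∑ l, φ (S l - R l) =
      ∑ p, φ (V p) + ∑ l, φ (S l) - φ (V p₀) - (∑ p ∈ univ.erase p₀, φ (W p) + ∑ l, φ (R l)) := by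
  simp only [map_sub, sum_sub_distrib]
  rw [sum_erase_eq_sub (mem_univ p₀)]
  abel

end AddMonoidHom

theorem stmt5_general (n : ℕ) (M K : Type*) [Fintype M] [Fintype K]
    [DecidableEq M] [DecidableEq K]
    (m₀ : M) (k₀ : K) (h : Fin n → ℂ) (c a : ℝ)
    (W W0 : M × K → Matrix (Fin n) (Fin n) ℂ) (hch : M × K → Fin n → ℂ)
    (R R0 : M → Matrix (Fin n) (Fin n) ℂ)
    (hW : ∀ p, (W p).PosSemidef)
    (hh : hch (m₀, k₀) = h) (σ2 : ℝ) :
    let H : Matrix (Fin n) (Fin n) ℂ := vecMulVec h (star h)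
    let trH : Matrix (Fin n) (Fin n) ℂ → ℝ := fun X => (star h ⬝ᵥ (X *ᵥ h)).re
    let wbar : M × K → Fin n → ℂ :=
      fun p => ((star (hch p) ⬝ᵥ (W p *ᵥ hch p)) ^ (-(1/2) : ℂ)) • (W p *ᵥ hch p)
    let Wbar : M × K → Matrix (Fin n) (Fin n) ℂ :=
      fun p => vecMulVec (wbar p) (star (wbar p))
    let Rbar : M → Matrix (Fin n) (Fin n) ℂ :=
      fun l => (∑ i : K, W (l, i)) + R l - ∑ i : K, Wbar (l, i)
    let F : (M × K → Matrix (Fin n) (Fin n) ℂ) → (M → Matrix (Fin n) (Fin n) ℂ) → ℝ :=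
      fun V S =>
        Real.logb 2 ((∑ p, trH (V p)) + (∑ l, trH (S l)) + σ2) - a -
          c * ((∑ p ∈ Finset.univ.erase (m₀, k₀), trH (V p - W0 p)) +
               ∑ l, trH (S l - R0 l))
    F Wbar Rbar = F W R := by
  intro _ trH wbar Wbar Rbar F
  have htrH : trH = quadFormRe h := rfl
  have htotal := (quadFormRe h).sum_map_add_sum_map_transfer W Wbar R
  have hp₀ : quadFormRe h (Wbar (m₀, k₀)) = quadFormRe h (W (m₀, k₀)) := by
    simp only [Wbar, wbar, hh]
    exact (hW (m₀, k₀)).quadFormRe_vecMulVec_rescale h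
  simp only [F, Rbar, htrH, AddMonoidHom.sum_erase_map_sub_add_sum_map_sub, htotal, hp₀]

theorem stmt5 (n : ℕ) (hn : 0 < n) (M K : Type*) [Fintype M] [Fintype K]
    [Nonempty M] [Nonempty K] [DecidableEq M] [DecidableEq K]
    (m₀ : M) (k₀ : K) (h : Fin n → ℂ) (c a : ℝ)
    (W W0 : M × K → Matrix (Fin n) (Fin n) ℂ) (hch : M × K → Fin n → ℂ)
    (R R0 : M → Matrix (Fin n) (Fin n) ℂ)
    (hW : ∀ p, (W p).PosSemidef) (hW0 : ∀ p, (W0 p).PosSemidef)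
    (hR : ∀ l, (R l).PosSemidef) (hR0 : ∀ l, (R0 l).PosSemidef)
    (hne : ∀ p, star (hch p) ⬝ᵥ (W p *ᵥ hch p) ≠ 0)
    (hh : hch (m₀, k₀) = h) (σ2 : ℝ) (hσ : 0 < σ2) :
    let H : Matrix (Fin n) (Fin n) ℂ := vecMulVec h (star h)
    let trH : Matrix (Fin n) (Fin n) ℂ → ℝ := fun X => (star h ⬝ᵥ (X *ᵥ h)).re
    let wbar : M × K → Fin n → ℂ :=
      fun p => ((star (hch p) ⬝ᵥ (W p *ᵥ hch p)) ^ (-(1/2) : ℂ)) • (W p *ᵥ hch p)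
    let Wbar : M × K → Matrix (Fin n) (Fin n) ℂ :=
      fun p => vecMulVec (wbar p) (star (wbar p))
    let Rbar : M → Matrix (Fin n) (Fin n) ℂ :=
      fun l => (∑ i : K, W (l, i)) + R l - ∑ i : K, Wbar (l, i)
    let F : (M × K → Matrix (Fin n) (Fin n) ℂ) → (M → Matrix (Fin n) (Fin n) ℂ) → ℝ :=
      fun V S =>
        Real.logb 2 ((∑ p, trH (V p)) + (∑ l, trH (S l)) + σ2) - a -
          c * ((∑ p ∈ Finset.univ.erase (m₀, k₀), trH (V p - W0 p)) +
               ∑ l, trH (S l - R0 l))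
    F Wbar Rbar = F W R :=
  stmt5_general n M K m₀ k₀ h c a W W0 hch R R0 hW hh σ2
end

section
/- Let n be a positive integer, let M and K be nonempty finite index sets, and fix (m₀,k₀) ∈ M × K. Let h ∈ ℂⁿ with H := h hᴴ. For each (l,i) ∈ M × K, let W_{l,i} be an n×n complex positive-semidefinite Hermitian matrix and h_{l,i} ∈ ℂⁿ a vector with h_{l,i}ᴴ W_{l,i} h_{l,i} ≠ 0 and h_{m₀,k₀} = h. Define w̃_{l,i} := (h_{l,i}ᴴ W_{l,i} h_{l,i})^(−1/2) · (W_{l,i} h_{l,i}) and W̃_{l,i} := w̃_{l,i} w̃_{l,i}ᴴ. Then for every σ² > 0: (i) tr(H W̃_{m₀,k₀}) = tr(H W_{m₀,k₀}); (ii) for every (l,i), tr(H W̃_{l,i}) ≤ tr(H W_{l,i}); and consequently (iii) tr(H W̃_{m₀,k₀}) / ( Σ_{(l,i)≠(m₀,k₀)} tr(H W̃_{l,i}) + σ² ) ≥ tr(H W_{m₀,k₀}) / ( Σ_{(l,i)≠(m₀,k₀)} tr(H W_{l,i}) + σ² ). -/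
/-!
With `t = hᴴ W g` and `q = gᴴ W g`, the reconstructed beam gives `hᴴ W̃ h = |t|² / q`.
Cauchy–Schwarz for the semi-inner product `(x, y) ↦ xᴴ W y` bounds `|t|²` by `(hᴴ W h) q`,
with equality for `g = h`. So the desired signal power is unchanged while every interference
term can only shrink, and the SINR cannot decrease.
-/

open Matrix
open scoped ComplexOrder

theorem Complex.norm_cpow_neg_half_sq (z : ℂ) : ‖z ^ (-(1 / 2) : ℂ)‖ ^ 2 = ‖z‖⁻¹ := by
  have : (-(1 / 2) : ℂ) = ((-(1 / 2) : ℝ) : ℂ) := by push_cast; ring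
  rw [this, Complex.norm_cpow_real, ← Real.rpow_natCast, ← Real.rpow_mul (norm_nonneg z)]
  norm_num [Real.rpow_neg_one]

namespace Matrix

section RCLike

variable {ι 𝕜 : Type*} [Fintype ι] [RCLike 𝕜]

theorem PosSemidef.norm_dotProduct_mulVec_sq_le {A : Matrix ι ι 𝕜} (hA : A.PosSemidef)
    (x y : ι → 𝕜) :
    ‖star x ⬝ᵥ (A *ᵥ y)‖ ^ 2 ≤
      RCLike.re (star x ⬝ᵥ (A *ᵥ x)) * RCLike.re (star y ⬝ᵥ (A *ᵥ y)) := by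
  let := A.toSeminormedAddCommGroup hA
  let := A.toInnerProductSpace hA
  have hxy : (inner 𝕜 x y : 𝕜) = star x ⬝ᵥ (A *ᵥ y) := dotProduct_comm _ _
  have hxx : (inner 𝕜 x x : 𝕜) = star x ⬝ᵥ (A *ᵥ x) := dotProduct_comm _ _
  have hyy : (inner 𝕜 y y : 𝕜) = star y ⬝ᵥ (A *ᵥ y) := dotProduct_comm _ _
  have hswap : ‖(inner 𝕜 y x : 𝕜)‖ = ‖(inner 𝕜 x y : 𝕜)‖ := norm_inner_symm y x
  simpa [sq, ← hxy, ← hxx, ← hyy, hswap] using inner_mul_inner_self_le (𝕜 := 𝕜) x y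

theorem PosSemidef.norm_dotProduct_mulVec_self {A : Matrix ι ι 𝕜} (hA : A.PosSemidef)
    (x : ι → 𝕜) : ‖star x ⬝ᵥ (A *ᵥ x)‖ = RCLike.re (star x ⬝ᵥ (A *ᵥ x)) := by
  conv_rhs => rw [← RCLike.norm_of_nonneg' (hA.dotProduct_mulVec_nonneg x)]
  exact (RCLike.ofReal_re _).symm

theorem dotProduct_vecMulVec_star_mulVec (x w : ι → 𝕜) :
    star x ⬝ᵥ (vecMulVec w (star w) *ᵥ x) = (‖star x ⬝ᵥ w‖ ^ 2 : ℝ) := by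
  rw [vecMulVec_mulVec, op_smul_eq_smul, dotProduct_smul, star_dotProduct w x, smul_eq_mul,
    RCLike.star_def, RCLike.conj_mul, RCLike.ofReal_pow]

end RCLike

variable {ι : Type*} [Fintype ι]

/-- The beam `w̃` of the rank-one reconstruction (18a). -/
noncomputable def rankOneReconstruction (W : Matrix ι ι ℂ) (g : ι → ℂ) : ι → ℂ :=
  (star g ⬝ᵥ (W *ᵥ g)) ^ (-(1 / 2) : ℂ) • (W *ᵥ g)

theorem norm_dotProduct_rankOneReconstruction_sq (W : Matrix ι ι ℂ) (g x : ι → ℂ) :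
    ‖star x ⬝ᵥ rankOneReconstruction W g‖ ^ 2 =
      ‖star x ⬝ᵥ (W *ᵥ g)‖ ^ 2 / ‖star g ⬝ᵥ (W *ᵥ g)‖ := by
  rw [rankOneReconstruction, dotProduct_smul, smul_eq_mul, norm_mul, mul_pow,
    Complex.norm_cpow_neg_half_sq, inv_mul_eq_div]

theorem PosSemidef.norm_dotProduct_rankOneReconstruction_sq_le {W : Matrix ι ι ℂ}
    (hW : W.PosSemidef) (g x : ι → ℂ) :
    ‖star x ⬝ᵥ rankOneReconstruction W g‖ ^ 2 ≤ (star x ⬝ᵥ (W *ᵥ x)).re := by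
  rw [norm_dotProduct_rankOneReconstruction_sq, hW.norm_dotProduct_mulVec_self]
  exact div_le_of_le_mul₀ (hW.re_dotProduct_nonneg g) (hW.re_dotProduct_nonneg x)
    (hW.norm_dotProduct_mulVec_sq_le x g)

theorem PosSemidef.norm_dotProduct_rankOneReconstruction_self_sq {W : Matrix ι ι ℂ}
    (hW : W.PosSemidef) (x : ι → ℂ) :
    ‖star x ⬝ᵥ rankOneReconstruction W x‖ ^ 2 = (star x ⬝ᵥ (W *ᵥ x)).re := by
  rw [norm_dotProduct_rankOneReconstruction_sq, hW.norm_dotProduct_mulVec_self, sq,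
    mul_self_div_self, RCLike.re_to_complex]

end Matrix

theorem stmt6_general (n : ℕ) (M K : Type*) [Fintype M] [Fintype K]
    [DecidableEq M] [DecidableEq K]
    (m₀ : M) (k₀ : K) (h : Fin n → ℂ)
    (W : M × K → Matrix (Fin n) (Fin n) ℂ) (hch : M × K → Fin n → ℂ)
    (hW : ∀ p, (W p).PosSemidef)
    (hh : hch (m₀, k₀) = h) (σ2 : ℝ) (hσ : 0 < σ2) :
    let H : Matrix (Fin n) (Fin n) ℂ := vecMulVec h (star h)
    let trH : Matrix (Fin n) (Fin n) ℂ → ℝ := fun X => (star h ⬝ᵥ (X *ᵥ h)).re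
    let wtil : M × K → Fin n → ℂ :=
      fun p => ((star (hch p) ⬝ᵥ (W p *ᵥ hch p)) ^ (-(1/2) : ℂ)) • (W p *ᵥ hch p)
    let Wtil : M × K → Matrix (Fin n) (Fin n) ℂ :=
      fun p => vecMulVec (wtil p) (star (wtil p))
    trH (Wtil (m₀, k₀)) = trH (W (m₀, k₀)) ∧
    (∀ p : M × K, trH (Wtil p) ≤ trH (W p)) ∧
    trH (Wtil (m₀, k₀)) / ((∑ p ∈ Finset.univ.erase (m₀, k₀), trH (Wtil p)) + σ2)
      ≥ trH (W (m₀, k₀)) / ((∑ p ∈ Finset.univ.erase (m₀, k₀), trH (W p)) + σ2) := by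
  intro _ trH wtil Wtil
  have hWtil : ∀ p, trH (Wtil p) = ‖star h ⬝ᵥ rankOneReconstruction (W p) (hch p)‖ ^ 2 :=
    fun p => (congrArg RCLike.re (dotProduct_vecMulVec_star_mulVec h (wtil p))).trans
      (RCLike.ofReal_re _)
  have hle : ∀ p, trH (Wtil p) ≤ trH (W p) := fun p =>
    hWtil p ▸ (hW p).norm_dotProduct_rankOneReconstruction_sq_le _ h
  have hdesired : trH (Wtil (m₀, k₀)) = trH (W (m₀, k₀)) := by
    rw [hWtil, hh]
    exact (hW _).norm_dotProduct_rankOneReconstruction_self_sq h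
  refine ⟨hdesired, hle, ?_⟩
  rw [ge_iff_le, ← hdesired]
  have hnonneg : ∀ p, 0 ≤ trH (Wtil p) := fun p => by rw [hWtil]; positivity
  refine div_le_div_of_nonneg_left (hnonneg _)
    (add_pos_of_nonneg_of_pos (Finset.sum_nonneg fun p _ => hnonneg p) hσ) ?_
  exact add_le_add_left (Finset.sum_le_sum fun p _ => hle p) σ2

theorem stmt6 (n : ℕ) (hn : 0 < n) (M K : Type*) [Fintype M] [Fintype K]
    [Nonempty M] [Nonempty K] [DecidableEq M] [DecidableEq K]
    (m₀ : M) (k₀ : K) (h : Fin n → ℂ)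
    (W : M × K → Matrix (Fin n) (Fin n) ℂ) (hch : M × K → Fin n → ℂ)
    (hW : ∀ p, (W p).PosSemidef)
    (hne : ∀ p, star (hch p) ⬝ᵥ (W p *ᵥ hch p) ≠ 0)
    (hh : hch (m₀, k₀) = h) (σ2 : ℝ) (hσ : 0 < σ2) :
    let H : Matrix (Fin n) (Fin n) ℂ := vecMulVec h (star h)
    let trH : Matrix (Fin n) (Fin n) ℂ → ℝ := fun X => (star h ⬝ᵥ (X *ᵥ h)).re
    let wtil : M × K → Fin n → ℂ :=
      fun p => ((star (hch p) ⬝ᵥ (W p *ᵥ hch p)) ^ (-(1/2) : ℂ)) • (W p *ᵥ hch p)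
    let Wtil : M × K → Matrix (Fin n) (Fin n) ℂ :=
      fun p => vecMulVec (wtil p) (star (wtil p))
    trH (Wtil (m₀, k₀)) = trH (W (m₀, k₀)) ∧
    (∀ p : M × K, trH (Wtil p) ≤ trH (W p)) ∧
    trH (Wtil (m₀, k₀)) / ((∑ p ∈ Finset.univ.erase (m₀, k₀), trH (Wtil p)) + σ2)
      ≥ trH (W (m₀, k₀)) / ((∑ p ∈ Finset.univ.erase (m₀, k₀), trH (W p)) + σ2) :=
  stmt6_general n M K m₀ k₀ h W hch hW hh σ2 hσ
end
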